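/- In the Fermi-surface framework: let Q = Y_s + (1/2)Y² where Y is the geodesic unit Fermi field (so ∫Q dμ_P = 0 and ∫Q_s dμ_P = 0 on the surface, Q = g(t) + ∫₀^s q^t(r)dr with ∫q^t dμ_P = 0), and suppose ∫Y_t dμ_P = 0 on the surface. Then ∫ Q_t dμ_P = 0 on the surface, where Q_t = Y_{st} + Y Y_t. -/

import Mathlib

open MeasureTheory Filter Topology

/-!
Differentiating `s ↦ ∫ Y_t dμ_{S(t,s)} = 0` by the Leibniz rule gives `∫ Y_{st} + ∫ Y_t Y = 0`,
which is the claim once the integral may be split. Splitting needs the bounded continuous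
integrands to be a.e. strongly measurable, and this is forced by the Leibniz rule itself: were
`C` not, then `u ↦ ∫ (1 + (u - s) C) dμ_u`, being continuous and nonzero at `s`, would make `C`
measurable for `μ_u` at all `u ≠ s` near `s`, so that `∫ (C + 1) dμ_u - ∫ C dμ_u = μ_u(Ω)` there;
the left side tends to `0 - 0` while the right side tends to `μ_s(Ω) ≠ 0`.
-/

namespace BoundedContinuousFunction

variable {Ω : Type*} [TopologicalSpace Ω] [MeasurableSpace Ω]

lemma integrable_of_aestronglyMeasurable {ν : Measure Ω} [IsFiniteMeasure ν] (C : Ω →ᵇ ℝ)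
    (hC : AEStronglyMeasurable C ν) : Integrable C ν :=
  Integrable.of_bound hC ‖C‖ (ae_of_all _ C.norm_coe_le_norm)

lemma aestronglyMeasurable_of_integral_ne_zero {ν : Measure Ω} (C : Ω →ᵇ ℝ)
    (hC : ∫ x, C x ∂ν ≠ 0) : AEStronglyMeasurable C ν := by
  by_contra h
  exact hC (integral_undef fun hi => h hi.1)

theorem aestronglyMeasurable_of_continuousAt_integral (μ : ℝ → Measure Ω)
    [∀ u, IsFiniteMeasure (μ u)] (s : ℝ) [NeZero (μ s)]
    (hμ : ∀ W : ℝ → Ω →ᵇ ℝ, Differentiable ℝ W → ContinuousAt (fun u => ∫ x, W u x ∂μ u) s)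
    (C : Ω →ᵇ ℝ) : AEStronglyMeasurable C (μ s) := by
  by_contra hC
  set one : Ω →ᵇ ℝ := const Ω 1
  have hmass : ContinuousAt (fun u => ∫ x, one x ∂μ u) s := hμ _ (differentiable_const _)
  have hmass_ne : ∫ x, one x ∂μ s ≠ 0 := by simp [one, measureReal_univ_ne_zero]
  have hnear : ∀ᶠ u in 𝓝[≠] s, AEStronglyMeasurable C (μ u) := by
    have hF : ContinuousAt (fun u => ∫ x, (one + (u - s) • C) x ∂μ u) s := hμ _ (by fun_prop)
    have hFs : ∫ x, (one + (s - s) • C) x ∂μ s ≠ 0 := by simpa using hmass_ne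
    filter_upwards [nhdsWithin_le_nhds (hF.eventually_ne hFs), self_mem_nhdsWithin]
      with u hu hus
    have hW := ((aestronglyMeasurable_of_integral_ne_zero _ hu).sub
      (aestronglyMeasurable_const (b := (1 : ℝ)))).const_smul (u - s)⁻¹
    convert hW using 1
    ext x
    simp [one, inv_mul_cancel_left₀ (sub_ne_zero.mpr hus)]
  have hsplit : ∀ᶠ u in 𝓝[≠] s,
      ∫ x, (C + one) x ∂μ u - ∫ x, C x ∂μ u = ∫ x, one x ∂μ u := by
    filter_upwards [hnear] with u hu
    have hone : Integrable (fun x => one x) (μ u) := integrable_const (1 : ℝ)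
    rw [coe_add, Pi.add_def, integral_add (C.integrable_of_aestronglyMeasurable hu) hone]
    ring
  have hC1 : ¬ AEStronglyMeasurable (C + one) (μ s) := fun h =>
    hC (by simpa [one] using h.sub (aestronglyMeasurable_const (b := (1 : ℝ))))
  have hlim : Tendsto (fun u => ∫ x, (C + one) x ∂μ u - ∫ x, C x ∂μ u) (𝓝[≠] s) (𝓝 0) := by
    have hC1u := (hμ _ (differentiable_const (C + one))).tendsto
    have hCu := (hμ _ (differentiable_const C)).tendsto
    simpa only [integral_undef fun hi => hC1 hi.1, integral_undef fun hi => hC hi.1,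
      sub_zero] using (hC1u.sub hCu).mono_left nhdsWithin_le_nhds
  exact hmass_ne (tendsto_nhds_unique (hmass.tendsto.mono_left nhdsWithin_le_nhds)
    (hlim.congr' hsplit))

end BoundedContinuousFunction

open BoundedContinuousFunction

theorem stmt_17_general {Ω : Type*} [TopologicalSpace Ω] [MeasurableSpace Ω]
    (μ : ℝ → ℝ → Measure Ω) (hprob : ∀ t s, IsProbabilityMeasure (μ t s))
    (Yf Yt Yst : ℝ → ℝ → BoundedContinuousFunction Ω ℝ)
    (hYts : ∀ t s : ℝ, HasDerivAt (fun u => Yt t u) (Yst t s) s)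
    (hLeibS : ∀ t : ℝ, ∀ W W' : ℝ → BoundedContinuousFunction Ω ℝ,
      (∀ s, HasDerivAt W (W' s) s) → ∀ s : ℝ,
        HasDerivAt (fun u => ∫ x, W u x ∂μ t u)
          (∫ x, W' s x ∂μ t s + ∫ x, W s x * Yf t s x ∂μ t s) s)
    (hYtmean : ∀ t s, ∫ x, Yt t s x ∂μ t s = 0) :
    ∀ t s : ℝ, ∫ x, (Yst t s x + Yf t s x * Yt t s x) ∂μ t s = 0 := by
  intro t s
  have := hprob t
  have hintegrable (C : Ω →ᵇ ℝ) : Integrable C (μ t s) :=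
    C.integrable_of_aestronglyMeasurable <|
      aestronglyMeasurable_of_continuousAt_integral (μ t) s
        (fun W hW => (hLeibS t W (deriv W) (fun u => (hW u).hasDerivAt) s).continuousAt) C
  have hderiv := hLeibS t (Yt t) (Yst t) (hYts t) s
  rw [show (fun u => ∫ x, Yt t u x ∂μ t u) = fun _ => 0 from funext (hYtmean t)] at hderiv
  have hsum := (hasDerivAt_const s (0 : ℝ)).unique hderiv
  have hprod : Integrable (fun x => Yf t s x * Yt t s x) (μ t s) := hintegrable (Yf t s * Yt t s)
  rw [integral_add (hintegrable _) hprod]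
  simpa only [mul_comm] using hsum.symm

theorem stmt_17 {Ω : Type*} [TopologicalSpace Ω] [MeasurableSpace Ω]
    (μ : ℝ → ℝ → Measure Ω) (hprob : ∀ t s, IsProbabilityMeasure (μ t s))
    (Yf Ys Yt Yst : ℝ → ℝ → BoundedContinuousFunction Ω ℝ)
    (hYs : ∀ t s : ℝ, HasDerivAt (fun u => Yf t u) (Ys t s) s)
    (hYt : ∀ t s : ℝ, HasDerivAt (fun u => Yf u s) (Yt t s) t)
    (hYts : ∀ t s : ℝ, HasDerivAt (fun u => Yt t u) (Yst t s) s)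
    (hLeibS : ∀ t : ℝ, ∀ W W' : ℝ → BoundedContinuousFunction Ω ℝ,
      (∀ s, HasDerivAt W (W' s) s) → ∀ s : ℝ,
        HasDerivAt (fun u => ∫ x, W u x ∂μ t u)
          (∫ x, W' s x ∂μ t s + ∫ x, W s x * Yf t s x ∂μ t s) s)
    (gq : ℝ → Ω → ℝ) (q : ℝ → ℝ → Ω → ℝ)
    (hQstruct : ∀ t s : ℝ, ∀ x : Ω,
      Ys t s x + (1 / 2) * (Yf t s x) ^ 2 = gq t x + ∫ r in (0 : ℝ)..s, q t r x)
    (hqmean : ∀ t s, ∫ x, q t s x ∂μ t s = 0)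
    (hQmean : ∀ t s, ∫ x, (Ys t s x + (1 / 2) * (Yf t s x) ^ 2) ∂μ t s = 0)
    (hQsmean : ∀ t s, ∫ x, q t s x ∂μ t s = 0)
    (hYtmean : ∀ t s, ∫ x, Yt t s x ∂μ t s = 0) :
    ∀ t s : ℝ, ∫ x, (Yst t s x + Yf t s x * Yt t s x) ∂μ t s = 0 :=
  stmt_17_general μ hprob Yf Yt Yst hYts hLeibS hYtmean
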